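/- Let A = A_1⋯A_n be a serial factorization of a right ideal A of a ring R. Then for every i ≠ j, the right R-modules R/A_i and R/A_j have different monogeny classes and different epigeny classes; that is, it is not the case that there exist injective R-module homomorphisms both R/A_i → R/A_j and R/A_j → R/A_i, and it is not the case that there exist surjective R-module homomorphisms both R/A_i → R/A_j and R/A_j → R/A_i. -/
import Mathlib


open MulOpposite

universe u

/-- The product `A·B` of two right ideals of `R` (right ideals are `Rᵐᵒᵖ`-submodules of `R`):
the set of all finite sums of products `a * b` with `a ∈ A`, `b ∈ B`. -/
def rmul {R : Type u} [Ring R] (A B : Submodule Rᵐᵒᵖ R) : Submodule Rᵐᵒᵖ R :=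
  Submodule.span Rᵐᵒᵖ {x : R | ∃ a ∈ A, ∃ b ∈ B, x = a * b}

/-- The product `A₁⋯Aₙ` of a (possibly empty) list of right ideals. -/
def rprod {R : Type u} [Ring R] : List (Submodule Rᵐᵒᵖ R) → Submodule Rᵐᵒᵖ R
  | [] => ⊤
  | [A] => A
  | A :: l => rmul A (rprod l)

/-- A finite family of right ideals is coindependent if `Aᵢ + ⋂_{j ≠ i} Aⱼ = R` for every `i`. -/
def Coindep {R : Type u} [Ring R] {n : ℕ} (A : Fin n → Submodule Rᵐᵒᵖ R) : Prop :=
  ∀ i, A i ⊔ (⨅ j, ⨅ (_ : j ≠ i), A j) = ⊤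

/-- A module is uniserial if its submodules are linearly ordered by inclusion. -/
def IsUniserialMod (S : Type*) [Ring S] (M : Type*) [AddCommGroup M] [Module S M] : Prop :=
  ∀ N P : Submodule S M, N ≤ P ∨ P ≤ N

/-- A right ideal is a two-sided ideal if it is also closed under left multiplication. -/
def IsTwoSidedRid {R : Type u} [Ring R] (A : Submodule Rᵐᵒᵖ R) : Prop :=
  ∀ (r : R), ∀ x ∈ A, r * x ∈ A

/-- A serial factorization of a right ideal `A`: a factorization `A = A₁⋯Aₙ` into proper
right ideals that pairwise commute, form a coindependent family, and are such that every
quotient `R/Aᵢ` is a uniserial right `R`-module. -/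
def IsSerialFact {R : Type u} [Ring R] {n : ℕ} (A : Submodule Rᵐᵒᵖ R)
    (F : Fin n → Submodule Rᵐᵒᵖ R) : Prop :=
  (∀ i, F i ≠ ⊤) ∧ (∀ i j, rmul (F i) (F j) = rmul (F j) (F i)) ∧ Coindep F ∧
    (∀ i, IsUniserialMod Rᵐᵒᵖ (R ⧸ F i)) ∧ A = rprod (List.ofFn F)

/-- A right ideal has a serial factorization if it admits one of some length. -/
def HasSerialFact {R : Type u} [Ring R] (A : Submodule Rᵐᵒᵖ R) : Prop :=
  ∃ (n : ℕ) (F : Fin n → Submodule Rᵐᵒᵖ R), IsSerialFact A F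

/-- A right chain ring: its right ideals are linearly ordered by inclusion. -/
def IsRightChainRing (R : Type u) [Ring R] : Prop :=
  ∀ A B : Submodule Rᵐᵒᵖ R, A ≤ B ∨ B ≤ A

/-- A ring is right duo if every right ideal is a two-sided ideal. -/
def IsRightDuo (R : Type u) [Ring R] : Prop :=
  ∀ A : Submodule Rᵐᵒᵖ R, IsTwoSidedRid A

/-- The principal right ideal `rR`. -/
def rspan {R : Type u} [Ring R] (r : R) : Submodule Rᵐᵒᵖ R :=
  Submodule.span Rᵐᵒᵖ ({r} : Set R)
lemma rmul_le_left' {R : Type u} [Ring R] (A B : Submodule Rᵐᵒᵖ R) : rmul A B ≤ A := by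
  rw [rmul, Submodule.span_le]
  rintro x ⟨a, ha, b, hb, rfl⟩
  simpa [op_smul_eq_mul] using A.smul_mem (op b) ha

lemma mul_mem_rmul' {R : Type u} [Ring R] {A B : Submodule Rᵐᵒᵖ R} {a b : R}
    (ha : a ∈ A) (hb : b ∈ B) : a * b ∈ rmul A B :=
  Submodule.subset_span ⟨a, ha, b, hb, rfl⟩

lemma mul_rmul_mem' {R : Type u} [Ring R] {A B C : Submodule Rᵐᵒᵖ R} {d : R}
    (hd : ∀ b ∈ B, d * b ∈ C) : ∀ x ∈ rmul B A, d * x ∈ C := by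
  intro x hx
  refine Submodule.span_induction ?_ ?_ ?_ ?_ hx
  · rintro y ⟨b, hb, a, ha, rfl⟩
    rw [← mul_assoc]
    simpa [op_smul_eq_mul] using C.smul_mem (op a) (hd b hb)
  · simp
  · intro y z _ _ hy hz
    simpa [mul_add] using C.add_mem hy hz
  · intro m y _ hy
    have : d * (m • y) = m • (d * y) := by
      induction m using MulOpposite.rec' with
      | h r => simp [op_smul_eq_mul, mul_assoc]
    rw [this]
    exact C.smul_mem m hy

lemma hom_eq_mul' {R : Type u} [Ring R] {A B : Submodule Rᵐᵒᵖ R}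
    (f : (R ⧸ A) →ₗ[Rᵐᵒᵖ] (R ⧸ B)) :
    ∃ c : R, ∀ x : R, f (Submodule.Quotient.mk x) = Submodule.Quotient.mk (c * x) := by
  obtain ⟨c, hc⟩ := Submodule.Quotient.mk_surjective B (f (Submodule.Quotient.mk 1))
  refine ⟨c, fun x => ?_⟩
  have h1 : (Submodule.Quotient.mk x : R ⧸ A) = op x • Submodule.Quotient.mk (1 : R) := by
    rw [← Submodule.Quotient.mk_smul]
    simp [op_smul_eq_mul]
  rw [h1, map_smul, ← hc, ← Submodule.Quotient.mk_smul]
  simp [op_smul_eq_mul]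

/-- Proposition: in a serial factorization `A = A₁⋯Aₙ`, for `i ≠ j` the modules `R/Aᵢ`
and `R/Aⱼ` have different monogeny classes and different epigeny classes. -/
theorem statement4 {R : Type u} [Ring R] [Nontrivial R] {n : ℕ}
    (A : Submodule Rᵐᵒᵖ R) (F : Fin n → Submodule Rᵐᵒᵖ R)
    (hsf : IsSerialFact A F) :
    ∀ i j, i ≠ j →
      ¬((∃ f : (R ⧸ F i) →ₗ[Rᵐᵒᵖ] (R ⧸ F j), Function.Injective f) ∧
        (∃ g : (R ⧸ F j) →ₗ[Rᵐᵒᵖ] (R ⧸ F i), Function.Injective g)) ∧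
      ¬((∃ f : (R ⧸ F i) →ₗ[Rᵐᵒᵖ] (R ⧸ F j), Function.Surjective f) ∧
        (∃ g : (R ⧸ F j) →ₗ[Rᵐᵒᵖ] (R ⧸ F i), Function.Surjective g)) := by
  obtain ⟨hproper, hcomm, hcoind, huni, hfact⟩ := hsf
  intro i j hij
  have hsup : F i ⊔ F j = ⊤ := by
    have h := hcoind i
    have hle : (⨅ k, ⨅ _ : k ≠ i, F k) ≤ F j :=
      le_trans (iInf_le _ j) (iInf_le _ (Ne.symm hij))
    exact eq_top_iff.2 (h ▸ sup_le_sup_left hle (F i))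
  -- decompose an arbitrary element along F i ⊔ F j = ⊤
  have hdec : ∀ c : R, ∃ a ∈ F i, ∃ b ∈ F j, c = a + b := by
    intro c
    obtain ⟨a, ha, b, hb, hab⟩ := Submodule.mem_sup.1 (hsup ▸ Submodule.mem_top (x := c))
    exact ⟨a, ha, b, hb, hab.symm⟩
  constructor
  · rintro ⟨⟨f, hf⟩, ⟨g, hg⟩⟩
    obtain ⟨c₀, hc₀⟩ := hom_eq_mul' f
    obtain ⟨d, hd⟩ := hom_eq_mul' g
    obtain ⟨c, hcA, b₀, hb₀, hceq⟩ := hdec c₀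
    -- f is also given by multiplication by c ∈ F i
    have hfc : ∀ x : R, f (Submodule.Quotient.mk x) = Submodule.Quotient.mk (c * x) := by
      intro x
      rw [hc₀]
      rw [Submodule.Quotient.eq]
      have : c₀ * x - c * x = b₀ * x := by rw [hceq]; rw [add_mul]; abel
      rw [this]
      simpa [op_smul_eq_mul] using (F j).smul_mem (op x) hb₀
    -- d·(F j) ⊆ F i
    have hdB : ∀ b ∈ F j, d * b ∈ F i := by
      intro b hb
      have h0 : (Submodule.Quotient.mk b : R ⧸ F j) = 0 := (Submodule.Quotient.mk_eq_zero _).2 hb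
      have := hd b
      rw [h0, map_zero] at this
      exact (Submodule.Quotient.mk_eq_zero _).1 this.symm
    -- for every x ∈ (F i)·(F j) = (F j)·(F i), d·x ∈ F i, hence x ∈ F j by injectivity of g
    have hABB : ∀ x ∈ rmul (F i) (F j), x ∈ F j := by
      intro x hx
      rw [hcomm i j] at hx
      have hdx : d * x ∈ F i := mul_rmul_mem' hdB x hx
      have : g (Submodule.Quotient.mk x) = g 0 := by
        rw [hd, map_zero]
        exact (Submodule.Quotient.mk_eq_zero _).2 hdx
      exact (Submodule.Quotient.mk_eq_zero _).1 (hg this)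
    -- for every b ∈ F j, c·b ∈ F j, hence b ∈ F i by injectivity of f
    have hBA : F j ≤ F i := by
      intro b hb
      have hcb : c * b ∈ F j := hABB _ (mul_mem_rmul' hcA hb)
      have : f (Submodule.Quotient.mk b) = f 0 := by
        rw [hfc, map_zero]
        exact (Submodule.Quotient.mk_eq_zero _).2 hcb
      exact (Submodule.Quotient.mk_eq_zero _).1 (hf this)
    exact hproper i (eq_top_iff.2 (hsup ▸ sup_le le_rfl hBA))
  · rintro ⟨⟨f, hf⟩, ⟨g, hg⟩⟩
    obtain ⟨c₀, hc₀⟩ := hom_eq_mul' f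
    obtain ⟨d₀, hd₀⟩ := hom_eq_mul' g
    obtain ⟨c, hcA, b₀, hb₀, hceq⟩ := hdec c₀
    obtain ⟨a₀, ha₀, d, hdB, hdeq⟩ := hdec d₀
    have hfc : ∀ x : R, f (Submodule.Quotient.mk x) = Submodule.Quotient.mk (c * x) := by
      intro x
      rw [hc₀, Submodule.Quotient.eq]
      have : c₀ * x - c * x = b₀ * x := by rw [hceq]; rw [add_mul]; abel
      rw [this]
      simpa [op_smul_eq_mul] using (F j).smul_mem (op x) hb₀
    have hgd : ∀ x : R, g (Submodule.Quotient.mk x) = Submodule.Quotient.mk (d * x) := by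
      intro x
      rw [hd₀, Submodule.Quotient.eq]
      have : d₀ * x - d * x = a₀ * x := by rw [hdeq]; rw [add_mul]; abel
      rw [this]
      simpa [op_smul_eq_mul] using (F i).smul_mem (op x) ha₀
    -- d * c ∈ (F j)·(F i) = (F i)·(F j) ≤ F i
    have hdc : d * c ∈ F i := by
      have h1 : d * c ∈ rmul (F j) (F i) := mul_mem_rmul' hdB hcA
      rw [← hcomm i j] at h1
      exact rmul_le_left' (F i) (F j) h1
    -- g ∘ f surjective hits mk 1, forcing 1 ∈ F i
    obtain ⟨y, hy⟩ := hg (Submodule.Quotient.mk 1)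
    obtain ⟨x', hx'⟩ := hf y
    obtain ⟨x, rfl⟩ := Submodule.Quotient.mk_surjective (F i) x'
    rw [hfc] at hx'
    rw [← hx', hgd] at hy
    have h1 : d * (c * x) - 1 ∈ F i := (Submodule.Quotient.eq _).1 hy
    have h2 : d * (c * x) ∈ F i := by
      rw [← mul_assoc]
      simpa [op_smul_eq_mul] using (F i).smul_mem (op x) hdc
    have h3 : (1 : R) ∈ F i := by
      have := (F i).sub_mem h2 h1
      simpa using this
    refine hproper i (Submodule.eq_top_iff'.2 fun r => ?_)
    simpa [op_smul_eq_mul] using (F i).smul_mem (op r) h3
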